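/- arXiv:2203.12278 — 2 statements merged into one kernel-verified Lean document; each statement's English description precedes it below -/
import Mathlib

section
/- The protected expected phylogenetic diversity f(S) = Σ_{a∈A} λ_a (1 − Π_{i∈L_a \ S} p_i) is a submodular set function on subsets of T: for all S ⊆ S' ⊆ T and any species j ∉ S', f(S ∪ {j}) − f(S) ≥ f(S' ∪ {j}) − f(S'). -/
/-!
For `j ∈ L \ S`, the product `∏ i ∈ L \ S, p i` is `p j` times the product over
`L \ insert j S`, so adding `j` to `S` changes the arc's term `1 - ∏ i ∈ L \ S, p i` by
`-(1 - p j) * ∏ i ∈ L \ insert j S, p i`. As `S` grows the set `L \ insert j S` shrinks, and a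
product of factors in `[0, 1]` over a smaller set is larger, so this change decreases; summing
with weights `λ_a ≥ 0` gives submodularity.
-/

open Finset

theorem prod_sdiff_insert_sub_prod_sdiff {R T : Type*} [CommRing R] [DecidableEq T]
    (f : T → R) (L : Finset T) {S : Finset T} {j : T} (hj : j ∉ S) :
    ∏ i ∈ L \ insert j S, f i - ∏ i ∈ L \ S, f i =
      (if j ∈ L then 1 - f j else 0) * ∏ i ∈ L \ insert j S, f i := by
  split_ifs with hjL
  · have hL : L \ S = insert j (L \ insert j S) := by
      ext i
      simp only [mem_sdiff, mem_insert]
      grind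
    rw [hL, prod_insert (by simp)]
    ring
  · have hL : L \ insert j S = L \ S := by
      ext i
      simp only [mem_sdiff, mem_insert]
      grind
    rw [hL, sub_self, zero_mul]

theorem prod_sdiff_insert_sub_prod_sdiff_mono {R T : Type*} [CommRing R] [PartialOrder R]
    [IsOrderedRing R] [DecidableEq T] {f : T → R} (hf0 : ∀ i, 0 ≤ f i) (hf1 : ∀ i, f i ≤ 1)
    (L : Finset T) {S S' : Finset T} (hS : S ⊆ S') {j : T} (hj : j ∉ S') :
    ∏ i ∈ L \ insert j S, f i - ∏ i ∈ L \ S, f i ≤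
      ∏ i ∈ L \ insert j S', f i - ∏ i ∈ L \ S', f i := by
  rw [prod_sdiff_insert_sub_prod_sdiff f L (fun h => hj (hS h)),
    prod_sdiff_insert_sub_prod_sdiff f L hj]
  have hcoeff : 0 ≤ if j ∈ L then 1 - f j else 0 := by
    split_ifs
    exacts [sub_nonneg.2 (hf1 j), le_rfl]
  exact mul_le_mul_of_nonneg_left (prod_anti_set_of_le_one hf0 hf1
    (sdiff_subset_sdiff le_rfl (insert_subset_insert j hS))) hcoeff

theorem protected_epd_submodular_general {A T : Type} [Fintype A] [DecidableEq T]
    (lam : A → ℝ) (L : A → Finset T) (p : T → ℝ)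
    (hlam : ∀ a, 0 ≤ lam a)
    (hp : ∀ i, 0 ≤ p i ∧ p i ≤ 1)
    (S S' : Finset T) (hSS' : S ⊆ S') (j : T) (hj : j ∉ S') :
    (∑ a : A, lam a * (1 - ∏ i ∈ L a \ insert j S', p i)) -
        (∑ a : A, lam a * (1 - ∏ i ∈ L a \ S', p i)) ≤
      (∑ a : A, lam a * (1 - ∏ i ∈ L a \ insert j S, p i)) -
        (∑ a : A, lam a * (1 - ∏ i ∈ L a \ S, p i)) := by
  rw [← sum_sub_distrib, ← sum_sub_distrib]
  refine sum_le_sum fun a _ => ?_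
  have := mul_le_mul_of_nonneg_left (prod_sdiff_insert_sub_prod_sdiff_mono
    (fun i => (hp i).1) (fun i => (hp i).2) (L a) hSS' hj) (hlam a)
  linarith

/-- The protected ePD set function is submodular. -/
theorem protected_epd_submodular {A T : Type} [Fintype A] [DecidableEq T]
    (lam : A → ℝ) (L : A → Finset T) (p : T → ℝ)
    (hlam : ∀ a, 0 ≤ lam a)
    (hL : ∀ a, (L a).Nonempty)
    (hp : ∀ i, 0 ≤ p i ∧ p i ≤ 1)
    (S S' : Finset T) (hSS' : S ⊆ S') (j : T) (hj : j ∉ S') :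
    (∑ a : A, lam a * (1 - ∏ i ∈ L a \ insert j S', p i)) -
        (∑ a : A, lam a * (1 - ∏ i ∈ L a \ S', p i)) ≤
      (∑ a : A, lam a * (1 - ∏ i ∈ L a \ insert j S, p i)) -
        (∑ a : A, lam a * (1 - ∏ i ∈ L a \ S, p i)) :=
  protected_epd_submodular_general lam L p hlam hp S S' hSS' j hj
end

section
/- If |p¹_i − p²_i| ≤ ε for all species i, then for every subset S ⊆ T, |f¹(S) − f²(S)| ≤ ε · |T| · Σ_{a∈A} λ_a; consequently, protecting the set optimal for the wrong scenario loses at most 2ε·|T|·Σ_{a∈A} λ_a of ePD: f¹(S*¹) − f¹(S*²) ≤ 2ε·|T|·Σ_{a∈A} λ_a. -/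
/-!
Each ePD term changes by `λ_a |Π q - Π p|`, and a product of factors of norm at most one is
`1`-Lipschitz in each factor, so telescoping bounds `|Π q - Π p|` by `Σ_i |q_i - p_i| ≤ |T| ε`.
For the second claim, compare through `f²`: `f¹(S*¹) ≤ f²(S*¹) + δ ≤ f²(S*²) + δ ≤ f¹(S*²) + 2δ`.
-/

open Finset

theorem norm_prod_sub_prod_le_sum_norm_sub {ι α : Type*} [NormedCommRing α] [NormOneClass α]
    [DecidableEq ι] (s : Finset ι) {f g : ι → α}
    (hf : ∀ i ∈ s, ‖f i‖ ≤ 1) (hg : ∀ i ∈ s, ‖g i‖ ≤ 1) :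
    ‖∏ i ∈ s, f i - ∏ i ∈ s, g i‖ ≤ ∑ i ∈ s, ‖f i - g i‖ := by
  induction s using Finset.induction_on with
  | empty => simp
  | @insert a s ha ih =>
    have hf' : ∀ i ∈ s, ‖f i‖ ≤ 1 := fun i hi => hf i (mem_insert_of_mem hi)
    have hg' : ∀ i ∈ s, ‖g i‖ ≤ 1 := fun i hi => hg i (mem_insert_of_mem hi)
    have hfa : ‖f a‖ ≤ 1 := hf a (mem_insert_self a s)
    have hgs : ‖∏ i ∈ s, g i‖ ≤ 1 :=
      (norm_prod_le s g).trans (prod_le_one (fun _ _ => norm_nonneg _) hg')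
    rw [prod_insert ha, prod_insert ha, sum_insert ha]
    calc ‖f a * ∏ i ∈ s, f i - g a * ∏ i ∈ s, g i‖
        = ‖f a * (∏ i ∈ s, f i - ∏ i ∈ s, g i) + (f a - g a) * ∏ i ∈ s, g i‖ := by
          congr 1; ring
      _ ≤ ‖f a‖ * ‖∏ i ∈ s, f i - ∏ i ∈ s, g i‖ + ‖f a - g a‖ * ‖∏ i ∈ s, g i‖ :=
          (norm_add_le _ _).trans (add_le_add (norm_mul_le _ _) (norm_mul_le _ _))
      _ ≤ 1 * ∑ i ∈ s, ‖f i - g i‖ + ‖f a - g a‖ * 1 := by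
          gcongr
          exact ih hf' hg'
      _ = ‖f a - g a‖ + ∑ i ∈ s, ‖f i - g i‖ := by ring

/-- The paper's `f^ω(S)`, with `p = p^ω` the vector of extinction probabilities. -/
def expectedPD {A T : Type*} [Fintype A] [DecidableEq T]
    (lam : A → ℝ) (L : A → Finset T) (p : T → ℝ) (S : Finset T) : ℝ :=
  ∑ a : A, lam a * (1 - ∏ i ∈ L a \ S, p i)

theorem abs_expectedPD_sub_expectedPD_le {A T : Type*} [Fintype A] [Fintype T] [DecidableEq T]
    {lam : A → ℝ} (L : A → Finset T) {p q : T → ℝ} {ε : ℝ} (hlam : ∀ a, 0 ≤ lam a)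
    (hp : ∀ i, |p i| ≤ 1) (hq : ∀ i, |q i| ≤ 1) (hε : ∀ i, |p i - q i| ≤ ε) (S : Finset T) :
    |expectedPD lam L p S - expectedPD lam L q S| ≤ ε * Fintype.card T * ∑ a : A, lam a := by
  have hprod : ∀ s : Finset T, |∏ i ∈ s, q i - ∏ i ∈ s, p i| ≤ Fintype.card T * ε := by
    intro s
    calc |∏ i ∈ s, q i - ∏ i ∈ s, p i| ≤ ∑ i ∈ s, |q i - p i| := by
          simpa only [Real.norm_eq_abs] using
            norm_prod_sub_prod_le_sum_norm_sub s (f := q) (g := p)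
              (fun i _ => (Real.norm_eq_abs _).trans_le (hq i))
              (fun i _ => (Real.norm_eq_abs _).trans_le (hp i))
      _ ≤ ∑ i, |q i - p i| :=
          sum_le_sum_of_subset_of_nonneg (subset_univ s) (fun _ _ _ => abs_nonneg _)
      _ ≤ Fintype.card T * ε := by
          simpa using sum_le_card_nsmul univ _ ε fun i _ => abs_sub_comm (q i) (p i) ▸ hε i
  unfold expectedPD
  rw [← sum_sub_distrib, mul_sum]
  refine (abs_sum_le_sum_abs _ _).trans (sum_le_sum fun a _ => ?_)
  calc |lam a * (1 - ∏ i ∈ L a \ S, p i) - lam a * (1 - ∏ i ∈ L a \ S, q i)|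
      = lam a * |∏ i ∈ L a \ S, q i - ∏ i ∈ L a \ S, p i| := by
        rw [← mul_sub, sub_sub_sub_cancel_left, abs_mul, abs_of_nonneg (hlam a)]
    _ ≤ lam a * (Fintype.card T * ε) := mul_le_mul_of_nonneg_left (hprod _) (hlam a)
    _ = ε * Fintype.card T * lam a := by ring

theorem wrong_scenario_loss_bound_general {A T : Type} [Fintype A] [Fintype T] [DecidableEq T]
    (lam : A → ℝ) (L : A → Finset T) (p₁ p₂ : T → ℝ) (ε : ℝ)
    (hlam : ∀ a, 0 ≤ lam a)
    (hp₁ : ∀ i, 0 ≤ p₁ i ∧ p₁ i ≤ 1)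
    (hp₂ : ∀ i, 0 ≤ p₂ i ∧ p₂ i ≤ 1)
    (hε : ∀ i, |p₁ i - p₂ i| ≤ ε)
    (f₁ f₂ : Finset T → ℝ)
    (hf₁ : ∀ S, f₁ S = ∑ a : A, lam a * (1 - ∏ i ∈ L a \ S, p₁ i))
    (hf₂ : ∀ S, f₂ S = ∑ a : A, lam a * (1 - ∏ i ∈ L a \ S, p₂ i))
    (k : ℕ) (S₁ S₂ : Finset T)
    (hS₁card : S₁.card ≤ k)
    (hS₂opt : ∀ S : Finset T, S.card ≤ k → f₂ S ≤ f₂ S₂) :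
    (∀ S : Finset T, |f₁ S - f₂ S| ≤ ε * (Fintype.card T) * ∑ a : A, lam a) ∧
      f₁ S₁ - f₁ S₂ ≤ 2 * ε * (Fintype.card T) * ∑ a : A, lam a := by
  have habs : ∀ (p : T → ℝ), (∀ i, 0 ≤ p i ∧ p i ≤ 1) → ∀ i, |p i| ≤ 1 :=
    fun p hp i => abs_le.mpr ⟨by linarith [hp i], (hp i).2⟩
  have hclose : ∀ S : Finset T, |f₁ S - f₂ S| ≤ ε * (Fintype.card T) * ∑ a : A, lam a := by
    intro S
    rw [hf₁, hf₂]
    exact abs_expectedPD_sub_expectedPD_le L hlam (habs p₁ hp₁) (habs p₂ hp₂) hε S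
  refine ⟨hclose, ?_⟩
  have hS₂_beats_S₁ := hS₂opt S₁ hS₁card
  linarith [abs_le.mp (hclose S₁), abs_le.mp (hclose S₂)]

/-- Under an ε-perturbation of the probabilities, all protected ePD values change
by at most ε·|T|·PD, and using the wrong scenario's optimum loses at most twice
that amount. -/
theorem wrong_scenario_loss_bound {A T : Type} [Fintype A] [Fintype T] [DecidableEq T]
    (lam : A → ℝ) (L : A → Finset T) (p₁ p₂ : T → ℝ) (ε : ℝ)
    (hlam : ∀ a, 0 ≤ lam a)
    (hL : ∀ a, (L a).Nonempty)
    (hp₁ : ∀ i, 0 ≤ p₁ i ∧ p₁ i ≤ 1)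
    (hp₂ : ∀ i, 0 ≤ p₂ i ∧ p₂ i ≤ 1)
    (hε : ∀ i, |p₁ i - p₂ i| ≤ ε)
    (f₁ f₂ : Finset T → ℝ)
    (hf₁ : ∀ S, f₁ S = ∑ a : A, lam a * (1 - ∏ i ∈ L a \ S, p₁ i))
    (hf₂ : ∀ S, f₂ S = ∑ a : A, lam a * (1 - ∏ i ∈ L a \ S, p₂ i))
    (k : ℕ) (S₁ S₂ : Finset T)
    (hS₁card : S₁.card ≤ k) (hS₂card : S₂.card ≤ k)
    (hS₁opt : ∀ S : Finset T, S.card ≤ k → f₁ S ≤ f₁ S₁)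
    (hS₂opt : ∀ S : Finset T, S.card ≤ k → f₂ S ≤ f₂ S₂) :
    (∀ S : Finset T, |f₁ S - f₂ S| ≤ ε * (Fintype.card T) * ∑ a : A, lam a) ∧
      f₁ S₁ - f₁ S₂ ≤ 2 * ε * (Fintype.card T) * ∑ a : A, lam a :=
  wrong_scenario_loss_bound_general lam L p₁ p₂ ε hlam hp₁ hp₂ hε f₁ f₂ hf₁ hf₂ k S₁ S₂ hS₁card
    hS₂opt
end
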